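/- arXiv:1602.04353 — 4 statements merged into one kernel-verified Lean document; each statement's English description precedes it below -/
import Mathlib

section
/- Let 𝔸 be a relational structure on a set A whose automorphisms are dense in its endomorphisms. If Pol(𝔸) contains a pseudo-Siggers operation, then for all c₁, …, cₙ ∈ A the stabilizer clone Pol(𝔸, c₁, …, cₙ) contains a pseudo-Siggers operation; that is, there exist a 6-ary s and unary α, β, all belonging to Pol(𝔸, c₁, …, cₙ), such that α(s(x,y,x,z,y,z)) = β(s(y,x,z,x,z,y)) for all x, y, z ∈ A. -/
/-- A relational structure on a set `A`: a family of finitary relations on `A`. -/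
structure RelStruct (A : Type) : Type 1 where
  ι : Type
  arity : ι → ℕ
  rel : ∀ i : ι, Set (Fin (arity i) → A)

/-- An `n`-ary operation `f` preserves the `m`-ary relation `S`. -/
def Preserves {A : Type} {n m : ℕ} (f : (Fin n → A) → A) (S : Set (Fin m → A)) : Prop :=
  ∀ t : Fin n → Fin m → A, (∀ j, t j ∈ S) → (fun k => f (fun j => t j k)) ∈ S

/-- `f` is a polymorphism of `𝔸`: it preserves every relation of `𝔸`. -/
def IsPolymorphism {A : Type} (𝔸 : RelStruct A) {n : ℕ} (f : (Fin n → A) → A) : Prop :=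
  ∀ i, Preserves f (𝔸.rel i)

/-- The polymorphism clone of `𝔸`, arity by arity. -/
def Pol {A : Type} (𝔸 : RelStruct A) : ∀ n : ℕ, Set ((Fin n → A) → A) :=
  fun _ => {f | IsPolymorphism 𝔸 f}

/-- The stabilizer `Pol(𝔸, c₁, …, cₙ)` of the polymorphism clone by the constants
listed in `c`. -/
def PolStab {A : Type} (𝔸 : RelStruct A) (c : List A) : ∀ n : ℕ, Set ((Fin n → A) → A) :=
  fun _ => {f | IsPolymorphism 𝔸 f ∧ ∀ a ∈ c, f (fun _ => a) = a}

/-- `e` is an endomorphism of `𝔸`. -/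
def IsEndo {A : Type} (𝔸 : RelStruct A) (e : A → A) : Prop :=
  ∀ i, ∀ t ∈ 𝔸.rel i, (fun j => e (t j)) ∈ 𝔸.rel i

/-- `α` is an automorphism of `𝔸`: a bijective endomorphism whose inverse is an
endomorphism. -/
def IsAuto {A : Type} (𝔸 : RelStruct A) (α : Equiv.Perm A) : Prop :=
  IsEndo 𝔸 ⇑α ∧ IsEndo 𝔸 ⇑α.symm

/-- `𝔸` is a core: its automorphisms are dense in its endomorphisms. -/
def IsCore {A : Type} (𝔸 : RelStruct A) : Prop :=
  ∀ e : A → A, IsEndo 𝔸 e → ∀ S : Finset A,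
    ∃ α : Equiv.Perm A, IsAuto 𝔸 α ∧ ∀ a ∈ S, α a = e a

/-- The automorphism group of `𝔸` is oligomorphic: for every `k` there are finitely
many orbits on `k`-tuples, i.e. a finite set of tuples meeting every orbit. -/
def AutOligomorphic {A : Type} (𝔸 : RelStruct A) : Prop :=
  ∀ k : ℕ, ∃ S : Finset (Fin k → A), ∀ t : Fin k → A,
    ∃ t' ∈ S, ∃ α : Equiv.Perm A, IsAuto 𝔸 α ∧ ∀ i, α (t' i) = t i

/-- `C` is a function clone: it contains the projections and is closed under composition. -/
structure IsClone {X : Type} (C : ∀ n : ℕ, Set ((Fin n → X) → X)) : Prop where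
  proj : ∀ (n : ℕ) (i : Fin n), (fun x : Fin n → X => x i) ∈ C n
  comp : ∀ {n m : ℕ} (f : (Fin n → X) → X) (g : Fin n → (Fin m → X) → X),
    f ∈ C n → (∀ i, g i ∈ C m) → (fun x => f (fun i => g i x)) ∈ C m

/-- `C` is topologically closed: any operation agreeing with members of `C` on every
finite set belongs to `C`. -/
def CloneClosed {X : Type} (C : ∀ n : ℕ, Set ((Fin n → X) → X)) : Prop :=
  ∀ (n : ℕ) (f : (Fin n → X) → X),
    (∀ F : Finset (Fin n → X), ∃ g ∈ C n, ∀ t ∈ F, g t = f t) → f ∈ C n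

/-- The permutation `g` belongs to the group of the clone `C`: both `g` and its inverse
are (unary) members of `C`. -/
def InGroupOf {X : Type} (C : ∀ n : ℕ, Set ((Fin n → X) → X)) (g : Equiv.Perm X) : Prop :=
  (fun x : Fin 1 → X => g (x 0)) ∈ C 1 ∧ (fun x : Fin 1 → X => g.symm (x 0)) ∈ C 1

/-- The clone `C` is oligomorphic: its group has finitely many orbits on `k`-tuples
for every `k`. -/
def CloneOligomorphic {X : Type} (C : ∀ n : ℕ, Set ((Fin n → X) → X)) : Prop :=
  ∀ k : ℕ, ∃ S : Finset (Fin k → X), ∀ t : Fin k → X,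
    ∃ t' ∈ S, ∃ g : Equiv.Perm X, InGroupOf C g ∧ ∀ i, g (t' i) = t i

/-- `C` contains a pseudo-Siggers operation: a 6-ary `s` and unary `α, β`, all in `C`,
with `α s(x,y,x,z,y,z) ≈ β s(y,x,z,x,z,y)`. -/
def HasPseudoSiggers {X : Type} (C : ∀ n : ℕ, Set ((Fin n → X) → X)) : Prop :=
  ∃ s ∈ C 6, ∃ α ∈ C 1, ∃ β ∈ C 1, ∀ x y z : X,
    α (fun _ => s ![x, y, x, z, y, z]) = β (fun _ => s ![y, x, z, x, z, y])

/-- `f` is a projection. -/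
def IsProjection {X : Type} {n : ℕ} (f : (Fin n → X) → X) : Prop :=
  ∃ i : Fin n, f = fun x => x i

/-- `ξ` is a clone homomorphism from `C` to the clone `P` of projections on the two-element
set: it is arity-preserving, takes values in the projections on members of `C`, sends
projections to the corresponding projections, and preserves composition. -/
structure CloneHomToProj {X : Type} (C : ∀ n : ℕ, Set ((Fin n → X) → X))
    (ξ : ∀ n : ℕ, ((Fin n → X) → X) → ((Fin n → Bool) → Bool)) : Prop where
  maps_to_proj : ∀ (n : ℕ), ∀ f ∈ C n, IsProjection (ξ n f)
  map_proj : ∀ (n : ℕ) (i : Fin n), ξ n (fun x => x i) = fun x => x i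
  map_comp : ∀ {n m : ℕ} (f : (Fin n → X) → X) (g : Fin n → (Fin m → X) → X),
    f ∈ C n → (∀ i, g i ∈ C m) →
    ξ m (fun x => f (fun i => g i x)) = fun x => ξ n f (fun i => ξ m (g i) x)

/-- `ξ` is continuous on `C` (w.r.t. the topology of pointwise convergence):
its value at `f ∈ C` is determined by the restriction of `f` to some finite set. -/
def CloneHomCont {X : Type} (C : ∀ n : ℕ, Set ((Fin n → X) → X))
    (ξ : ∀ n : ℕ, ((Fin n → X) → X) → ((Fin n → Bool) → Bool)) : Prop :=
  ∀ (n : ℕ), ∀ f ∈ C n, ∃ F : Finset (Fin n → X),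
    ∀ g ∈ C n, (∀ t ∈ F, g t = f t) → ξ n g = ξ n f

/-- Primitive positive formulas with `k` free variables, over a relational signature with
relation symbols `ι` of arities `ar`, and with parameters from `P`: atoms are equalities
and relations applied to variables or parameters, combined by conjunction and existential
quantification. -/
inductive PP (ι : Type) (ar : ι → ℕ) (P : Type) : ℕ → Type where
  | eq : ∀ {k : ℕ}, (Fin k ⊕ P) → (Fin k ⊕ P) → PP ι ar P k
  | rel : ∀ {k : ℕ} (i : ι), (Fin (ar i) → (Fin k ⊕ P)) → PP ι ar P k
  | and : ∀ {k : ℕ}, PP ι ar P k → PP ι ar P k → PP ι ar P k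
  | ex : ∀ {k : ℕ}, PP ι ar P (k + 1) → PP ι ar P k

/-- Satisfaction of a pp-formula under the valuation `v` of the free variables, where the
relation symbols are interpreted by `rels` and the parameters by `par`. -/
def PP.Sat {A ι P : Type} {ar : ι → ℕ} (rels : ∀ i, Set (Fin (ar i) → A)) (par : P → A) :
    {k : ℕ} → PP ι ar P k → (Fin k → A) → Prop
  | _, .eq x y, v => Sum.elim v par x = Sum.elim v par y
  | _, .rel i t, v => (fun j => Sum.elim v par (t j)) ∈ rels i
  | _, .and φ ψ, v => PP.Sat rels par φ v ∧ PP.Sat rels par ψ v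
  | _, .ex φ, v => ∃ a : A, PP.Sat rels par φ (Fin.snoc v a)

/-- The `m`-ary relation `S` is definable in `𝔸` by a pp-formula whose parameters are
interpreted via `par`. -/
def PPDefinable {A : Type} (𝔸 : RelStruct A) {P : Type} (par : P → A) {m : ℕ}
    (S : Set (Fin m → A)) : Prop :=
  ∃ φ : PP 𝔸.ι 𝔸.arity P m, S = {v | PP.Sat 𝔸.rel par φ v}

/-- `S` is pp-definable in `𝔸` with parameters (arbitrary elements of the domain). -/
def PPDefWithParams {A : Type} (𝔸 : RelStruct A) {m : ℕ} (S : Set (Fin m → A)) : Prop :=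
  PPDefinable 𝔸 (id : A → A) S

/-- `S` is pp-definable in `𝔸` without parameters. -/
def PPDefNoParams {A : Type} (𝔸 : RelStruct A) {m : ℕ} (S : Set (Fin m → A)) : Prop :=
  PPDefinable 𝔸 (fun e : Empty => e.elim) S

/-- Reading a `(k·n)`-tuple as a `k`-tuple of `n`-tuples. -/
def unflatten {A : Type} {k n : ℕ} (w : Fin (k * n) → A) : Fin k → Fin n → A :=
  fun j i => w (finProdFinEquiv (j, i))

/-- `𝔸` pp-interprets `𝔹` with parameters: there are `n ≥ 1` and a surjective partial map
`h` from `Aⁿ` onto `B` (with domain `dom`) such that `dom`, the `h`-preimage of equality,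
and the `h`-preimage of every relation of `𝔹` are pp-definable with parameters in `𝔸`. -/
def PPInterpretsWithParams {A B : Type} (𝔸 : RelStruct A) (𝔹 : RelStruct B) : Prop :=
  ∃ n : ℕ, 1 ≤ n ∧ ∃ (dom : Set (Fin n → A)) (h : (Fin n → A) → B),
    (∀ b : B, ∃ t ∈ dom, h t = b) ∧
    PPDefWithParams 𝔸 dom ∧
    PPDefWithParams 𝔸 {w : Fin (2 * n) → A |
      unflatten w 0 ∈ dom ∧ unflatten w 1 ∈ dom ∧ h (unflatten w 0) = h (unflatten w 1)} ∧
    ∀ i : 𝔹.ι, PPDefWithParams 𝔸 {w : Fin (𝔹.arity i * n) → A |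
      (∀ j, unflatten w j ∈ dom) ∧ (fun j => h (unflatten w j)) ∈ 𝔹.rel i}

/-- The structure `K₃ = ({1,2,3}; ≠)`. -/
def K3 : RelStruct (Fin 3) where
  ι := Unit
  arity := fun _ => 2
  rel := fun _ => {v | v 0 ≠ v 1}

/-- The permutation group `G` is oligomorphic. -/
def GroupOligomorphic {X : Type} (G : Subgroup (Equiv.Perm X)) : Prop :=
  ∀ k : ℕ, ∃ S : Finset (Fin k → X), ∀ t : Fin k → X,
    ∃ t' ∈ S, ∃ α ∈ G, ∀ i, α (t' i) = t i

/-- The orbit of `x` under `G`. -/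
def orbitOf {X : Type} (G : Subgroup (Equiv.Perm X)) (x : X) : Set X :=
  {y | ∃ α ∈ G, α x = y}

/-- The binary relation `R` is invariant under `G`. -/
def GGInvariant {X : Type} (R : X → X → Prop) (G : Subgroup (Equiv.Perm X)) : Prop :=
  ∀ α ∈ G, ∀ x y, R x y → R (α x) (α y)

/-- The relational structure associated with a gg-system `(R, G)`: its relations are `R`
together with all orbits of the componentwise action of `G` on finite tuples. -/
def ggStruct {X : Type} (R : X → X → Prop) (G : Subgroup (Equiv.Perm X)) : RelStruct X where
  ι := Unit ⊕ (Σ k : ℕ, Fin k → X)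
  arity := Sum.elim (fun _ => 2) (fun p => p.1)
  rel := fun i => match i with
    | Sum.inl _ => {v : Fin 2 → X | R (v 0) (v 1)}
    | Sum.inr p => {v : Fin p.1 → X | ∃ α ∈ G, ∀ j, α (p.2 j) = v j}

/-- `a, b, c` induce a `K₃` in `R`: pairwise distinct and pairwise related. -/
def Triangle {X : Type} (R : X → X → Prop) (a b c : X) : Prop :=
  a ≠ b ∧ a ≠ c ∧ b ≠ c ∧ R a b ∧ R a c ∧ R b c

/-- The graph `(X; R)` contains a `K₃`. -/
def ContainsK3 {X : Type} (R : X → X → Prop) : Prop :=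
  ∃ a b c, Triangle R a b c

/-- The gg-system `(R, G)` has a pseudoloop: an edge `(a, α(a))` with `α ∈ G`. -/
def HasPseudoloop {X : Type} (R : X → X → Prop) (G : Subgroup (Equiv.Perm X)) : Prop :=
  ∃ a, ∃ α ∈ G, R a (α a)

/-- The support of `R`: elements contained in an edge. -/
def Support {X : Type} (R : X → X → Prop) : Set X :=
  {x | ∃ y, R x y}

/-- The number of `G`-orbits contained in the support of `R`. -/
noncomputable def supportOrbitCount {X : Type} (R : X → X → Prop)
    (G : Subgroup (Equiv.Perm X)) : ℕ :=
  Nat.card ↥(orbitOf G '' Support R)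

/-- Minimality of a pseudoloop-free gg-system `(R, G)` containing a `K₃`: it does not
pp-define a symmetric relation `R'` giving a pseudoloop-free gg-system containing a `K₃`
whose support consists of strictly fewer orbits. -/
def ggMinimal {X : Type} (R : X → X → Prop) (G : Subgroup (Equiv.Perm X)) : Prop :=
  ¬ ∃ R' : X → X → Prop,
      PPDefNoParams (ggStruct R G) {v : Fin 2 → X | R' (v 0) (v 1)} ∧
      (∀ x y, R' x y → R' y x) ∧ GGInvariant R' G ∧
      ContainsK3 R' ∧ ¬ HasPseudoloop R' G ∧
      supportOrbitCount R' G < supportOrbitCount R G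

/-- `x` and `y` are `n`-diamond-connected with respect to `R`. -/
def DiamondConn {X : Type} (R : X → X → Prop) (n : ℕ) (x y : X) : Prop :=
  ∃ a b c d : ℕ → X,
    (∀ i < n, Triangle R (a i) (b i) (c i) ∧ Triangle R (b i) (c i) (d i)) ∧
    a 0 = x ∧ (∀ i, i + 1 < n → d i = a (i + 1)) ∧ d (n - 1) = y

/-!
Let `s, α, β` witness the pseudo-Siggers identity in `Pol(𝔸)` and let `e(a) = s(a, …, a)`.
By density, some automorphism `γ` agrees with `e` on the constants, so `γ⁻¹ ∘ s` fixes them;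
likewise some automorphism `δ` agrees with `a ↦ α(γ a)` on the constants, so `δ⁻¹ ∘ α ∘ γ`
fixes them, and so does `δ⁻¹ ∘ β ∘ γ` because the identity at `x = y = z` gives
`α ∘ e = β ∘ e`. Composing with automorphisms preserves polymorphisms and the identity.
-/

section Polymorphisms

variable {A : Type} {𝔸 : RelStruct A}

theorem IsPolymorphism.isEndo_diag {n : ℕ} {f : (Fin n → A) → A} (hf : IsPolymorphism 𝔸 f) :
    IsEndo 𝔸 (fun a => f (fun _ => a)) :=
  fun i t ht => hf i (fun _ => t) (fun _ => ht)

theorem IsEndo.isPolymorphism_comp {e : A → A} {n : ℕ} {f : (Fin n → A) → A}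
    (he : IsEndo 𝔸 e) (hf : IsPolymorphism 𝔸 f) : IsPolymorphism 𝔸 (fun x => e (f x)) :=
  fun i t ht => he i _ (hf i t ht)

theorem IsPolymorphism.comp_isEndo {n : ℕ} {f : (Fin n → A) → A} {e : A → A}
    (hf : IsPolymorphism 𝔸 f) (he : IsEndo 𝔸 e) :
    IsPolymorphism 𝔸 (fun x => f (fun j => e (x j))) :=
  fun i t ht => hf i (fun j k => e (t j k)) (fun j => he i (t j) (ht j))

theorem IsCore.exists_isAuto_eqOn {e : A → A} (h𝔸 : IsCore 𝔸) (he : IsEndo 𝔸 e) (c : List A) :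
    ∃ γ : Equiv.Perm A, IsAuto 𝔸 γ ∧ ∀ a ∈ c, γ a = e a := by
  classical
  obtain ⟨γ, hγ, hγc⟩ := h𝔸 e he c.toFinset
  exact ⟨γ, hγ, fun a ha => hγc a (List.mem_toFinset.mpr ha)⟩

end Polymorphisms

section PseudoSiggers

variable {X : Type}

def PseudoSiggersIdentity (s : (Fin 6 → X) → X) (α β : (Fin 1 → X) → X) : Prop :=
  ∀ x y z : X, α (fun _ => s ![x, y, x, z, y, z]) = β (fun _ => s ![y, x, z, x, z, y])

theorem PseudoSiggersIdentity.apply_diag {s : (Fin 6 → X) → X} {α β : (Fin 1 → X) → X}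
    (h : PseudoSiggersIdentity s α β) (a : X) :
    α (fun _ => s (fun _ => a)) = β (fun _ => s (fun _ => a)) := by
  have hconst : (![a, a, a, a, a, a] : Fin 6 → X) = fun _ => a := by
    funext j; fin_cases j <;> rfl
  simpa only [hconst] using h a a a

theorem PseudoSiggersIdentity.conj {s : (Fin 6 → X) → X} {α β : (Fin 1 → X) → X}
    (h : PseudoSiggersIdentity s α β) (γ δ : Equiv.Perm X) :
    PseudoSiggersIdentity (fun x => γ.symm (s x))
      (fun x => δ.symm (α (fun j => γ (x j)))) (fun x => δ.symm (β (fun j => γ (x j)))) := by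
  intro x y z
  simp only [Equiv.apply_symm_apply]
  exact congrArg δ.symm (h x y z)

end PseudoSiggers

/-- If the automorphisms of `𝔸` are dense in its endomorphisms and
`Pol(𝔸)` contains a pseudo-Siggers operation, then so does every stabilizer
`Pol(𝔸, c₁, …, cₙ)`. -/
theorem statement1 {A : Type} (𝔸 : RelStruct A) (hCore : IsCore 𝔸)
    (hPS : HasPseudoSiggers (Pol 𝔸)) :
    ∀ c : List A, HasPseudoSiggers (PolStab 𝔸 c) := by
  intro c
  obtain ⟨s, hs, α, hα, β, hβ, hid : PseudoSiggersIdentity s α β⟩ := hPS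
  obtain ⟨γ, hγ, hγc⟩ := hCore.exists_isAuto_eqOn hs.isEndo_diag c
  have hαγ : IsPolymorphism 𝔸 (fun x => α (fun j => γ (x j))) := hα.comp_isEndo hγ.1
  obtain ⟨δ, hδ, hδc⟩ := hCore.exists_isAuto_eqOn hαγ.isEndo_diag c
  have hβγ_eq_αγ : ∀ a ∈ c, β (fun _ => γ a) = α (fun _ => γ a) := fun a ha => by
    rw [hγc a ha]
    exact (hid.apply_diag a).symm
  refine ⟨_, ⟨hγ.2.isPolymorphism_comp hs, fun a ha => ?_⟩,
    _, ⟨hδ.2.isPolymorphism_comp hαγ, fun a ha => ?_⟩,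
    _, ⟨hδ.2.isPolymorphism_comp (hβ.comp_isEndo hγ.1), fun a ha => ?_⟩, hid.conj γ δ⟩
  · rw [← hγc a ha, Equiv.symm_apply_apply]
  · rw [← hδc a ha, Equiv.symm_apply_apply]
  · rw [hβγ_eq_αγ a ha, ← hδc a ha, Equiv.symm_apply_apply]
end

section
/- Let C be a topologically closed oligomorphic function clone on a countable set X. If C has local pseudo-Siggers operations — that is, for every finite subset A ⊆ X there exist a 6-ary s ∈ C and unary α, β ∈ C such that α(s(x,y,x,z,y,z)) = β(s(y,x,z,x,z,y)) for all x, y, z ∈ A — then C has a pseudo-Siggers operation: there exist a 6-ary s ∈ C and unary α, β ∈ C with α(s(x,y,x,z,y,z)) = β(s(y,x,z,x,z,y)) for all x, y, z ∈ X. -/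
/-! Up to the group of the clone, the restrictions of the local solutions to the `n`-th finite
piece of a countable domain form finitely many orbits (oligomorphicity), so König's lemma yields a
coherent sequence of orbits; moving each solution by a group element makes the sequence converge,
and the limit lies in the clone by topological closedness. A group element moves the 6-ary
operation and the unary ones in opposite directions, so the limit is taken first for the 6-ary
operation and then, with it fixed, for the pair of unary operations. -/

open CategoryTheory in
theorem exists_seq_of_finite_inverse_system (N : ℕ → Type) [∀ n, Finite (N n)]
    [∀ n, Nonempty (N n)] (π : ∀ n, N (n + 1) → N n) :
    ∃ b : ∀ n, N n, ∀ n, π n (b (n + 1)) = b n := by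
  let F := Functor.ofOpSequence (X := N) fun n => TypeCat.ofHom (π n)
  have : ∀ j : ℕᵒᵖ, Finite (F.obj j) := fun j => inferInstanceAs (Finite (N j.unop))
  have : ∀ j : ℕᵒᵖ, Nonempty (F.obj j) := fun j => inferInstanceAs (Nonempty (N j.unop))
  obtain ⟨u, hu⟩ := nonempty_sections_of_finite_inverse_system F
  refine ⟨fun n => u (Opposite.op n), fun n => ?_⟩
  have h := hu (homOfLE (Nat.le_add_right n 1)).op
  rwa [Functor.ofOpSequence_map_homOfLE_succ] at h

section CloneGroup

variable {X : Type} {C : ∀ n : ℕ, Set ((Fin n → X) → X)}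

theorem IsClone.comp_unary (hC : IsClone C) {n : ℕ} {u : (Fin 1 → X) → X}
    {f : (Fin n → X) → X} (hu : u ∈ C 1) (hf : f ∈ C n) :
    (fun x => u fun _ => f x) ∈ C n :=
  hC.comp u (fun _ => f) hu fun _ => hf

def cloneGroup (hC : IsClone C) : Subgroup (Equiv.Perm X) where
  carrier := {g | InGroupOf C g}
  one_mem' := ⟨hC.proj 1 0, hC.proj 1 0⟩
  mul_mem' hg hh := ⟨hC.comp_unary hg.1 hh.1, hC.comp_unary hh.2 hg.2⟩
  inv_mem' hg := ⟨hg.2, hg.1⟩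

theorem CloneOligomorphic.groupOligomorphic (hO : CloneOligomorphic C) (hC : IsClone C) :
    GroupOligomorphic (cloneGroup hC) :=
  hO

end CloneGroup

section Oligomorphic

variable {X : Type} {G : Subgroup (Equiv.Perm X)}

theorem GroupOligomorphic.finite_orbitRel_quotient (hG : GroupOligomorphic G) (ι : Type)
    [Finite ι] : Finite (MulAction.orbitRel.Quotient G (ι → X)) := by
  obtain ⟨k, ⟨e⟩⟩ := Finite.exists_equiv_fin ι
  obtain ⟨S, hS⟩ := hG k
  refine Finite.of_surjective (fun t : S => Quotient.mk _ (t.1 ∘ e)) ?_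
  rintro ⟨t⟩
  obtain ⟨t', ht', g, hg, hgt⟩ := hS (t ∘ e.symm)
  refine ⟨⟨t', ht'⟩,
    (Quotient.sound (s := MulAction.orbitRel G _) ⟨⟨g, hg⟩, funext fun i => ?_⟩).symm⟩
  simpa using hgt (e i)

end Oligomorphic

section Compactness

variable {X D : Type} {G : Subgroup (Equiv.Perm X)}

theorem GroupOligomorphic.exists_orbit_compatible_seq (hG : GroupOligomorphic G)
    (E : ℕ → Set D) (hE_fin : ∀ n, (E n).Finite) (hE_mono : Monotone E)
    (Q : ℕ → Set (D → X)) (hQ_anti : Antitone Q) (hQ_ne : ∀ n, (Q n).Nonempty) :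
    ∃ f : ℕ → D → X, (∀ n, f n ∈ Q n) ∧
      ∀ n, ∃ k ∈ G, ∀ d ∈ E n, f (n + 1) d = k (f n d) := by
  let res : ∀ n, (D → X) → (E n → X) := fun n f d => f d
  let trunc : ∀ n, (E (n + 1) → X) → (E n → X) := fun n t d => t ⟨d, hE_mono n.le_succ d.2⟩
  have htrunc : ∀ n (t u : E (n + 1) → X), MulAction.orbitRel G _ t u →
      MulAction.orbitRel G _ (trunc n t) (trunc n u) := by
    rintro n t u ⟨g, rfl⟩
    exact ⟨g, rfl⟩
  let Node : ℕ → Type := fun n =>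
    {o : MulAction.orbitRel.Quotient G (E n → X) // ∃ f ∈ Q n, Quotient.mk _ (res n f) = o}
  have : ∀ n, Finite (Node n) := fun n =>
    have := (hE_fin n).to_subtype
    have := hG.finite_orbitRel_quotient (E n)
    Subtype.finite
  have : ∀ n, Nonempty (Node n) := fun n =>
    let ⟨f, hf⟩ := hQ_ne n
    ⟨⟨_, f, hf, rfl⟩⟩
  have hπ : ∀ n (o : Node (n + 1)),
      ∃ f ∈ Q n, Quotient.mk _ (res n f) = Quotient.map (trunc n) (htrunc n) o.1 := by
    rintro n ⟨_, f, hf, rfl⟩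
    exact ⟨f, hQ_anti n.le_succ hf, rfl⟩
  obtain ⟨b, hb⟩ := exists_seq_of_finite_inverse_system Node fun n o => ⟨_, hπ n o⟩
  choose f hfQ hfb using fun n => (b n).2
  refine ⟨f, hfQ, fun n => ?_⟩
  have horbit : Quotient.mk (MulAction.orbitRel G _) (res n (f (n + 1))) =
      Quotient.mk _ (res n (f n)) := by
    calc Quotient.mk _ (res n (f (n + 1)))
        = Quotient.map (trunc n) (htrunc n) (Quotient.mk _ (res (n + 1) (f (n + 1)))) := rfl
      _ = (b n).1 := by rw [hfb (n + 1), ← hb n]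
      _ = Quotient.mk _ (res n (f n)) := (hfb n).symm
  obtain ⟨k, hk⟩ := Quotient.exact horbit
  exact ⟨k, k.2, fun d hd => (congrFun hk ⟨d, hd⟩).symm⟩

theorem exists_seq_eqOn_succ_of_orbit_compatible (E : ℕ → Set D) (Q : ℕ → Set (D → X))
    (hQ_smul : ∀ n, ∀ g ∈ G, ∀ f ∈ Q n, ⇑g ∘ f ∈ Q n) (f : ℕ → D → X)
    (hfQ : ∀ n, f n ∈ Q n) (hf : ∀ n, ∃ k ∈ G, ∀ d ∈ E n, f (n + 1) d = k (f n d)) :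
    ∃ F : ℕ → D → X, (∀ n, F n ∈ Q n) ∧ ∀ n, ∀ d ∈ E n, F (n + 1) d = F n d := by
  choose k hkG hk using hf
  let h : ℕ → Equiv.Perm X := fun n => Nat.rec 1 (fun n hn => hn * (k n)⁻¹) n
  have hhG : ∀ n, h n ∈ G := by
    intro n
    induction n with
    | zero => exact G.one_mem
    | succ n ih => exact G.mul_mem ih (G.inv_mem (hkG n))
  refine ⟨fun n => h n ∘ f n, fun n => hQ_smul n _ (hhG n) _ (hfQ n), fun n d hd => ?_⟩
  change (h n * (k n)⁻¹) (f (n + 1) d) = h n (f n d)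
  rw [hk n d hd, Equiv.Perm.mul_apply, Equiv.Perm.inv_def, Equiv.symm_apply_apply]

open Encodable in
theorem GroupOligomorphic.exists_limit_nat [Encodable D] (hG : GroupOligomorphic G)
    (Q : ℕ → Set (D → X)) (hQ_anti : Antitone Q)
    (hQ_smul : ∀ n, ∀ g ∈ G, ∀ f ∈ Q n, ⇑g ∘ f ∈ Q n) (hQ_ne : ∀ n, (Q n).Nonempty) :
    ∃ f₀ : D → X, ∀ n, ∃ f ∈ Q n, ∀ d, encode d < n → f d = f₀ d := by
  let E : ℕ → Set D := fun n => {d | encode d < n}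
  have hE_fin : ∀ n, (E n).Finite := fun n =>
    (Set.finite_lt_nat n).preimage encode_injective.injOn
  have hE_mono : Monotone E := fun m n hmn d (hd : encode d < m) => hd.trans_le hmn
  obtain ⟨f, hfQ, hf⟩ := hG.exists_orbit_compatible_seq E hE_fin hE_mono Q hQ_anti hQ_ne
  obtain ⟨F, hFQ, hF⟩ := exists_seq_eqOn_succ_of_orbit_compatible E Q hQ_smul f hfQ hf
  have hF_le : ∀ d m n, encode d < m → m ≤ n → F n d = F m d := by
    intro d m n hm hmn
    induction n, hmn using Nat.le_induction with
    | base => rfl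
    | succ n hmn ih => rw [hF n d (hm.trans_le hmn), ih]
  exact ⟨fun d => F (encode d + 1) d,
    fun n => ⟨F n, hFQ n, fun d hd => hF_le d _ n (Nat.lt_succ_self _) hd⟩⟩

open Encodable in
theorem GroupOligomorphic.exists_limit {Y : Type} [Countable Y] [Countable D]
    (hG : GroupOligomorphic G) (Q : Finset Y → Set (D → X)) (hQ_anti : Antitone Q)
    (hQ_smul : ∀ A, ∀ g ∈ G, ∀ f ∈ Q A, ⇑g ∘ f ∈ Q A) (hQ_ne : ∀ A, (Q A).Nonempty) :
    ∃ f₀ : D → X, ∀ (A : Finset Y) (F : Finset D), ∃ f ∈ Q A, ∀ d ∈ F, f d = f₀ d := by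
  classical
  let _ : Encodable Y := .ofCountable Y
  let _ : Encodable D := .ofCountable D
  let B : ℕ → Finset Y := fun n => (Finset.range n).preimage encode encode_injective.injOn
  have hB_mono : Monotone B := fun m n hmn y hy => by
    simp only [B, Finset.mem_preimage, Finset.mem_range] at hy ⊢
    omega
  obtain ⟨f₀, hf₀⟩ := hG.exists_limit_nat (fun n => Q (B n)) (hQ_anti.comp_monotone hB_mono)
    (fun n => hQ_smul (B n)) (fun n => hQ_ne (B n))
  refine ⟨f₀, fun A F => ?_⟩
  obtain ⟨n, hn⟩ := (A.image encode ∪ F.image encode).exists_nat_subset_range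
  obtain ⟨f, hf, hff₀⟩ := hf₀ n
  refine ⟨f, hQ_anti (fun y hy => ?_) hf, fun d hd => hff₀ d ?_⟩
  · simpa [B] using hn (by simp [hy])
  · simpa using hn (by simp [hd])

end Compactness

section PseudoSiggers

variable {X : Type}

def IsPseudoSiggersOn (s : (Fin 6 → X) → X) (α β : (Fin 1 → X) → X) (A : Set X) : Prop :=
  ∀ x ∈ A, ∀ y ∈ A, ∀ z ∈ A,
    α (fun _ => s ![x, y, x, z, y, z]) = β (fun _ => s ![y, x, z, x, z, y])

variable {s s' : (Fin 6 → X) → X} {α β : (Fin 1 → X) → X} {A B : Set X}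

theorem IsPseudoSiggersOn.mono (h : IsPseudoSiggersOn s α β B) (hAB : A ⊆ B) :
    IsPseudoSiggersOn s α β A :=
  fun x hx y hy z hz => h x (hAB hx) y (hAB hy) z (hAB hz)

theorem IsPseudoSiggersOn.perm_comp (h : IsPseudoSiggersOn s α β A) (g : Equiv.Perm X) :
    IsPseudoSiggersOn (⇑g ∘ s) (fun v => α fun _ => g.symm (v 0))
      (fun v => β fun _ => g.symm (v 0)) A := by
  intro x hx y hy z hz
  simpa using h x hx y hy z hz

theorem IsPseudoSiggersOn.congr (h : IsPseudoSiggersOn s α β A)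
    (hss' : ∀ x ∈ A, ∀ y ∈ A, ∀ z ∈ A,
      s ![x, y, x, z, y, z] = s' ![x, y, x, z, y, z] ∧
        s ![y, x, z, x, z, y] = s' ![y, x, z, x, z, y]) :
    IsPseudoSiggersOn s' α β A := by
  intro x hx y hy z hz
  obtain ⟨hl, hr⟩ := hss' x hx y hy z hz
  rw [← hl, ← hr]
  exact h x hx y hy z hz

variable [Countable X] {C : ∀ n : ℕ, Set ((Fin n → X) → X)} (hClone : IsClone C)
  (hClosed : CloneClosed C) (hG : GroupOligomorphic (cloneGroup hClone))
include hClone hClosed hG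

theorem exists_pseudoSiggers_op_of_local
    (hLocal : ∀ A : Finset X, ∃ s ∈ C 6, ∃ α ∈ C 1, ∃ β ∈ C 1, IsPseudoSiggersOn s α β A) :
    ∃ s ∈ C 6, ∀ A : Finset X, ∃ α ∈ C 1, ∃ β ∈ C 1, IsPseudoSiggersOn s α β A := by
  classical
  obtain ⟨s₀, hs₀⟩ := hG.exists_limit
    (fun A : Finset X => {s | s ∈ C 6 ∧ ∃ α ∈ C 1, ∃ β ∈ C 1, IsPseudoSiggersOn s α β A})
    (fun A B hAB s ⟨hs, α, hα, β, hβ, h⟩ => ⟨hs, α, hα, β, hβ, h.mono hAB⟩)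
    (fun A g hg s ⟨hs, α, hα, β, hβ, h⟩ => ⟨hClone.comp_unary hg.1 hs, _,
      hClone.comp_unary hα hg.2, _, hClone.comp_unary hβ hg.2, h.perm_comp g⟩)
    hLocal
  refine ⟨s₀, hClosed 6 s₀ fun F => ?_, fun A => ?_⟩
  · obtain ⟨s, ⟨hs, -⟩, hss₀⟩ := hs₀ ∅ F
    exact ⟨s, hs, hss₀⟩
  · let triples := A ×ˢ A ×ˢ A
    obtain ⟨s, ⟨-, α, hα, β, hβ, h⟩, hss₀⟩ := hs₀ A
      (triples.image (fun p => ![p.1, p.2.1, p.1, p.2.2, p.2.1, p.2.2]) ∪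
        triples.image (fun p => ![p.2.1, p.1, p.2.2, p.1, p.2.2, p.2.1]))
    refine ⟨α, hα, β, hβ, h.congr fun x hx y hy z hz => ?_⟩
    have hxyz : (x, y, z) ∈ triples := Finset.mem_product.2 ⟨hx, Finset.mem_product.2 ⟨hy, hz⟩⟩
    exact ⟨hss₀ _ (Finset.mem_union_left _ (Finset.mem_image_of_mem _ hxyz)),
      hss₀ _ (Finset.mem_union_right _ (Finset.mem_image_of_mem _ hxyz))⟩

theorem exists_pseudoSiggers_of_forall_finset {s : (Fin 6 → X) → X}
    (hs : ∀ A : Finset X, ∃ α ∈ C 1, ∃ β ∈ C 1, IsPseudoSiggersOn s α β A) :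
    ∃ α ∈ C 1, ∃ β ∈ C 1, IsPseudoSiggersOn s α β Set.univ := by
  classical
  obtain ⟨p₀, hp₀⟩ := hG.exists_limit
    (fun A : Finset X => {p : Bool × (Fin 1 → X) → X | (∀ b, (fun v => p (b, v)) ∈ C 1) ∧
      IsPseudoSiggersOn s (fun v => p (true, v)) (fun v => p (false, v)) A})
    (fun A B hAB p ⟨hp, h⟩ => ⟨hp, h.mono hAB⟩)
    (fun A g hg p ⟨hp, h⟩ => ⟨fun b => hClone.comp_unary hg.1 (hp b),
      fun x hx y hy z hz => congrArg g (h x hx y hy z hz)⟩)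
    (fun A => by
      obtain ⟨α, hα, β, hβ, h⟩ := hs A
      exact ⟨fun d => cond d.1 (α d.2) (β d.2), fun b => by cases b <;> assumption, h⟩)
  have hp₀C : ∀ b, (fun v => p₀ (b, v)) ∈ C 1 := fun b => hClosed 1 _ fun F => by
    obtain ⟨p, ⟨hp, -⟩, hpp₀⟩ := hp₀ ∅ (F.image (b, ·))
    exact ⟨_, hp b, fun v hv => hpp₀ _ (Finset.mem_image_of_mem _ hv)⟩
  refine ⟨_, hp₀C true, _, hp₀C false, fun x _ y _ z _ => ?_⟩
  obtain ⟨p, ⟨-, h⟩, hpp₀⟩ := hp₀ {x, y, z}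
    {(true, fun _ => s ![x, y, x, z, y, z]), (false, fun _ => s ![y, x, z, x, z, y])}
  change p₀ (true, _) = p₀ (false, _)
  rw [← hpp₀ _ (by simp), ← hpp₀ _ (by simp)]
  exact h x (by simp) y (by simp) z (by simp)

end PseudoSiggers

/-- A topologically closed oligomorphic function clone on a countable set
which has local pseudo-Siggers operations has a pseudo-Siggers operation. -/
theorem statement3 {X : Type} [Countable X] (C : ∀ n : ℕ, Set ((Fin n → X) → X))
    (hClone : IsClone C) (hClosed : CloneClosed C) (hOlig : CloneOligomorphic C)
    (hLocal : ∀ A : Finset X, ∃ s ∈ C 6, ∃ α ∈ C 1, ∃ β ∈ C 1,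
      ∀ x ∈ A, ∀ y ∈ A, ∀ z ∈ A,
        α (fun _ => s ![x, y, x, z, y, z]) = β (fun _ => s ![y, x, z, x, z, y])) :
    HasPseudoSiggers C := by
  have hG := hOlig.groupOligomorphic hClone
  obtain ⟨s, hs, hsA⟩ := exists_pseudoSiggers_op_of_local hClone hClosed hG hLocal
  obtain ⟨α, hα, β, hβ, h⟩ := exists_pseudoSiggers_of_forall_finset hClone hClosed hG hsA
  exact ⟨s, hs, α, hα, β, hβ, fun x y z => h x trivial y trivial z trivial⟩
end

section
/- Let C be a topologically closed oligomorphic function clone on a countable set X. Suppose that for every k ≥ 1 and every symmetric binary relation R on Xᵏ such that (a) R, regarded as a 2k-ary relation on X, is preserved by every operation in C, and (b) there exist three pairwise distinct, pairwise R-related elements of Xᵏ, there exist b ∈ Xᵏ and a member α of the group of C such that the pair (b, α(b)) belongs to R, where α acts on Xᵏ componentwise. Then C has a pseudo-Siggers operation: a 6-ary s ∈ C and unary α, β ∈ C with α(s(x,y,x,z,y,z)) = β(s(y,x,z,x,z,y)) for all x, y, z ∈ X. -/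
/-!
Given finitely many triples `tᵢ = (xᵢ, yᵢ, zᵢ)`, write `Lᵢ = (xᵢ,yᵢ,xᵢ,zᵢ,yᵢ,zᵢ)` and
`Rᵢ = (yᵢ,xᵢ,zᵢ,xᵢ,zᵢ,yᵢ)` and consider the relation `{((s Lᵢ)ᵢ, (s Rᵢ)ᵢ) : s ∈ C⁽⁶⁾}` on `Xᵏ`.
It is preserved by `C`, symmetric (swap the arguments of `s` in pairs), and its three
coordinate tuples `(xᵢ)ᵢ, (yᵢ)ᵢ, (zᵢ)ᵢ` are pairwise related, through the projections to the
arguments `0`, `2` and `4`; they are pairwise distinct once the triples `(u,v,v)` and `(u,u,v)`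
with `u ≠ v` are added. A pseudoloop is then an `s ∈ C` and a group element `α` with
`α (s Lᵢ) = s Rᵢ` for all `i`.

Passing from finitely many to all triples is a compactness argument: as `X` is countable and
the group of `C` is oligomorphic, a directed decreasing family of nonempty group-invariant
sets of maps `D → X` (`D` countable) has a common point in the closures for pointwise
convergence (König's lemma on the finitely many orbits of finite prefixes). This yields first a
single `s`, then a single pair `α, β`; both lie in `C` as `C` is closed.
-/

variable {X : Type}

section CloneGroup

variable {C : ∀ n : ℕ, Set ((Fin n → X) → X)}

def unaryOp (a : X → X) : (Fin 1 → X) → X := fun w => a (w 0)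

theorem IsClone.unaryOp_comp_mem (hC : IsClone C) {a : X → X} (ha : unaryOp a ∈ C 1)
    {n : ℕ} {f : (Fin n → X) → X} (hf : f ∈ C n) : (fun x => a (f x)) ∈ C n :=
  hC.comp (unaryOp a) (fun _ => f) ha fun _ => hf

def IsClone.group (hC : IsClone C) : Subgroup (Equiv.Perm X) where
  carrier := {g | InGroupOf C g}
  one_mem' := ⟨hC.proj 1 0, hC.proj 1 0⟩
  mul_mem' hg hh := ⟨hC.unaryOp_comp_mem hg.1 hh.1, hC.unaryOp_comp_mem hh.2 hg.2⟩
  inv_mem' hg := ⟨hg.2, hg.1⟩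

end CloneGroup

section Compactness

variable {D ι : Type}

def InPointwiseClosure (A : Set (D → X)) (f : D → X) : Prop :=
  ∀ F : Finset D, ∃ p ∈ A, ∀ d ∈ F, p d = f d

theorem InPointwiseClosure.comp {D' : Type} {A : Set (D → X)} {f : D → X}
    (hf : InPointwiseClosure A f) (φ : D' → D) :
    InPointwiseClosure ((· ∘ φ) '' A) (f ∘ φ) := by
  classical
  intro F
  obtain ⟨p, hp, hpf⟩ := hf (F.image φ)
  exact ⟨p ∘ φ, ⟨p, hp, rfl⟩, fun d hd => hpf _ (Finset.mem_image_of_mem φ hd)⟩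

theorem CloneClosed.mem_of_inPointwiseClosure {C : ∀ n : ℕ, Set ((Fin n → X) → X)}
    (hClosed : CloneClosed C) {n : ℕ} {A : Set ((Fin n → X) → X)} (hA : A ⊆ C n)
    {f : (Fin n → X) → X} (hf : InPointwiseClosure A f) : f ∈ C n :=
  hClosed n f fun F => by
    obtain ⟨p, hp, hpf⟩ := hf F
    exact ⟨p, hA hp, hpf⟩

variable [Preorder ι] [IsDirected ι (· ≤ ·)] [Nonempty ι]
  {G : Subgroup (Equiv.Perm X)} {A : ι → Set (D → X)}

def PrefixApprox (A : ι → Set (D → X)) (e : ℕ → D) (k : ℕ) (r : ℕ → X) : Prop :=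
  ∀ i, ∃ p ∈ A i, ∀ n < k, p (e n) = r n

theorem PrefixApprox.exists_succ (hG : GroupOligomorphic G) (hA : Antitone A)
    (hinv : ∀ i, ∀ g ∈ G, ∀ p ∈ A i, ⇑g ∘ p ∈ A i) {e : ℕ → D} {k : ℕ} {r : ℕ → X}
    (hr : PrefixApprox A e k r) :
    ∃ r', PrefixApprox A e (k + 1) r' ∧ ∀ n < k, r' n = r n := by
  classical
  obtain ⟨S, hS⟩ := hG (k + 1)
  -- Pigeonhole over the finitely many orbits of `(k+1)`-tuples, using that `A` decreases.
  have hrep : ∃ s ∈ S, ∀ i, ∃ p ∈ A i, (∀ n < k, p (e n) = r n) ∧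
      ∃ g ∈ G, ∀ j : Fin (k + 1), g (s j) = p (e j) := by
    by_contra! h
    choose! i hi using h
    obtain ⟨M, hM⟩ := (S.image i).exists_le
    obtain ⟨p, hp, hpr⟩ := hr M
    obtain ⟨s, hs, g, hg, hgs⟩ := hS fun j : Fin (k + 1) => p (e j)
    obtain ⟨j, hj⟩ := hi s hs p (hA (hM _ (Finset.mem_image_of_mem i hs)) hp) hpr g hg
    exact hj (hgs j)
  obtain ⟨s, -, hs⟩ := hrep
  obtain ⟨p₀, -, hp₀r, g₀, hg₀, hg₀s⟩ := hs (Classical.arbitrary ι)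
  refine ⟨fun n => p₀ (e n), fun i => ?_, hp₀r⟩
  obtain ⟨p, hp, -, g, hg, hgs⟩ := hs i
  refine ⟨⇑(g₀ * g⁻¹) ∘ p, hinv i _ (G.mul_mem hg₀ (G.inv_mem hg)) p hp, fun n hn => ?_⟩
  have hgn : g (s ⟨n, hn⟩) = p (e n) := hgs ⟨n, hn⟩
  simp only [Function.comp_apply, Equiv.Perm.mul_apply, ← hgn, Equiv.Perm.coe_inv,
    Equiv.symm_apply_apply]
  exact hg₀s ⟨n, hn⟩

theorem exists_forall_prefixApprox (hG : GroupOligomorphic G) (hA : Antitone A)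
    (hinv : ∀ i, ∀ g ∈ G, ∀ p ∈ A i, ⇑g ∘ p ∈ A i) (hne : ∀ i, (A i).Nonempty) (e : ℕ → D) :
    ∃ r : ℕ → X, ∀ k, PrefixApprox A e k r := by
  obtain ⟨p, -⟩ := hne (Classical.arbitrary ι)
  have : Nonempty X := ⟨p (e 0)⟩
  have hext : ∀ k r, PrefixApprox A e k r →
      ∃ r', PrefixApprox A e (k + 1) r' ∧ ∀ n < k, r' n = r n :=
    fun _ _ hr => hr.exists_succ hG hA hinv
  choose! next hnext hnext_eq using hext
  let seq : ℕ → ℕ → X := fun k => Nat.rec (fun n => p (e n)) next k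
  have hseq : ∀ k, PrefixApprox A e k (seq k) := by
    intro k
    induction k with
    | zero =>
      intro i
      obtain ⟨q, hq⟩ := hne i
      exact ⟨q, hq, fun n hn => absurd hn (Nat.not_lt_zero n)⟩
    | succ k ih => exact hnext k _ ih
  have hstable : ∀ n k, n < k → seq k n = seq (n + 1) n := by
    intro n k hk
    induction k, hk using Nat.le_induction with
    | base => rfl
    | succ k hk ih => exact (hnext_eq k _ (hseq k) n hk).trans ih
  refine ⟨fun n => seq (n + 1) n, fun k i => ?_⟩
  obtain ⟨q, hq, hqk⟩ := hseq k i
  exact ⟨q, hq, fun n hn => (hqk n hn).trans (hstable n k hn)⟩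

theorem exists_forall_inPointwiseClosure [Countable D] (hG : GroupOligomorphic G)
    (hA : Antitone A) (hinv : ∀ i, ∀ g ∈ G, ∀ p ∈ A i, ⇑g ∘ p ∈ A i)
    (hne : ∀ i, (A i).Nonempty) :
    ∃ f : D → X, ∀ i, InPointwiseClosure (A i) f := by
  rcases isEmpty_or_nonempty D with hD | hD
  · refine ⟨isEmptyElim, fun i F => ?_⟩
    obtain ⟨p, hp⟩ := hne i
    exact ⟨p, hp, fun d => isEmptyElim d⟩
  obtain ⟨e, he⟩ := exists_surjective_nat D
  obtain ⟨r, hr⟩ := exists_forall_prefixApprox hG hA hinv hne e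
  choose N hN using he
  refine ⟨fun d => r (N d), fun i F => ?_⟩
  obtain ⟨p, hp, hpr⟩ := hr (F.sup N + 1) i
  refine ⟨p, hp, fun d hd => ?_⟩
  show p d = r (N d)
  rw [← hpr _ (Nat.lt_succ_of_le (Finset.le_sup hd)), hN]

end Compactness

section PseudoSiggers

variable {C : ∀ n : ℕ, Set ((Fin n → X) → X)}

def siggersL (t : X × X × X) : Fin 6 → X := ![t.1, t.2.1, t.1, t.2.2, t.2.1, t.2.2]

def siggersR (t : X × X × X) : Fin 6 → X := ![t.2.1, t.1, t.2.2, t.1, t.2.2, t.2.1]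

def siggersSwap : Fin 6 → Fin 6 := ![1, 0, 3, 2, 5, 4]

theorem siggersL_comp_siggersSwap (t : X × X × X) : siggersL t ∘ siggersSwap = siggersR t := by
  funext j; fin_cases j <;> rfl

theorem siggersR_comp_siggersSwap (t : X × X × X) : siggersR t ∘ siggersSwap = siggersL t := by
  funext j; fin_cases j <;> rfl

def PseudoSiggersOn (T : Finset (X × X × X)) (s : (Fin 6 → X) → X) (a b : X → X) : Prop :=
  ∀ t ∈ T, a (s (siggersL t)) = b (s (siggersR t))

def siggersRel (C : ∀ n : ℕ, Set ((Fin n → X) → X)) {k : ℕ} (τ : Fin k → X × X × X)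
    (b c : Fin k → X) : Prop :=
  ∃ s ∈ C 6, b = (fun i => s (siggersL (τ i))) ∧ c = fun i => s (siggersR (τ i))

theorem siggersRel_symm (hC : IsClone C) {k : ℕ} (τ : Fin k → X × X × X) {b c : Fin k → X}
    (h : siggersRel C τ b c) : siggersRel C τ c b := by
  obtain ⟨s, hs, rfl, rfl⟩ := h
  refine ⟨fun w => s (w ∘ siggersSwap),
    hC.comp s (fun j w => w (siggersSwap j)) hs fun j => hC.proj 6 (siggersSwap j), ?_, ?_⟩
  · simp only [siggersL_comp_siggersSwap]
  · simp only [siggersR_comp_siggersSwap]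

theorem siggersRel_comp (hC : IsClone C) {k : ℕ} (τ : Fin k → X × X × X) {n : ℕ}
    {f : (Fin n → X) → X} (hf : f ∈ C n) {b c : Fin n → Fin k → X}
    (h : ∀ j, siggersRel C τ (b j) (c j)) :
    siggersRel C τ (fun i => f fun j => b j i) (fun i => f fun j => c j i) := by
  choose s hs hb hc using h
  refine ⟨fun w => f fun j => s j w, hC.comp f s hf hs, ?_, ?_⟩
  · simp only [hb]
  · simp only [hc]

theorem siggersRel_coord (hC : IsClone C) {k : ℕ} (τ : Fin k → X × X × X) :
    siggersRel C τ (fun i => (τ i).1) (fun i => (τ i).2.1) ∧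
    siggersRel C τ (fun i => (τ i).1) (fun i => (τ i).2.2) ∧
    siggersRel C τ (fun i => (τ i).2.1) (fun i => (τ i).2.2) :=
  ⟨⟨_, hC.proj 6 0, rfl, rfl⟩, ⟨_, hC.proj 6 2, rfl, rfl⟩, ⟨_, hC.proj 6 4, rfl, rfl⟩⟩

def TriangleForcesPseudoloop (C : ∀ n : ℕ, Set ((Fin n → X) → X)) : Prop :=
  ∀ k : ℕ, 1 ≤ k → ∀ R : (Fin k → X) → (Fin k → X) → Prop,
    (∀ b c, R b c → R c b) →
    (∀ (n : ℕ), ∀ f ∈ C n, ∀ b c : Fin n → Fin k → X,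
      (∀ j, R (b j) (c j)) →
      R (fun i => f (fun j => b j i)) (fun i => f (fun j => c j i))) →
    (∃ a b c : Fin k → X, a ≠ b ∧ a ≠ c ∧ b ≠ c ∧ R a b ∧ R a c ∧ R b c) →
    ∃ (b : Fin k → X) (α : Equiv.Perm X), InGroupOf C α ∧ R b (fun i => α (b i))

theorem exists_pseudoSiggers_of_coord_ne (hC : IsClone C) (hyp : TriangleForcesPseudoloop C)
    {k : ℕ} (τ : Fin k → X × X × X) (h₁₂ : (fun i => (τ i).1) ≠ fun i => (τ i).2.1)
    (h₁₃ : (fun i => (τ i).1) ≠ fun i => (τ i).2.2)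
    (h₂₃ : (fun i => (τ i).2.1) ≠ fun i => (τ i).2.2) :
    ∃ s ∈ C 6, ∃ α : Equiv.Perm X, InGroupOf C α ∧
      ∀ i, α (s (siggersL (τ i))) = s (siggersR (τ i)) := by
  have hk : 1 ≤ k := Nat.pos_of_ne_zero (by rintro rfl; exact h₁₂ (Subsingleton.elim _ _))
  obtain ⟨r₁₂, r₁₃, r₂₃⟩ := siggersRel_coord hC τ
  obtain ⟨b, α, hα, s, hs, rfl, hαb⟩ :=
    hyp k hk (siggersRel C τ) (fun _ _ => siggersRel_symm hC τ)
      (fun _ _ hf _ _ => siggersRel_comp hC τ hf) ⟨_, _, _, h₁₂, h₁₃, h₂₃, r₁₂, r₁₃, r₂₃⟩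
  exact ⟨s, hs, α, hα, fun i => congrFun hαb i⟩

theorem exists_pseudoSiggersOn_finset [Nontrivial X] (hC : IsClone C)
    (hyp : TriangleForcesPseudoloop C) (T : Finset (X × X × X)) :
    ∃ s ∈ C 6, ∃ a b : X → X, unaryOp a ∈ C 1 ∧ unaryOp b ∈ C 1 ∧ PseudoSiggersOn T s a b := by
  classical
  obtain ⟨u, v, huv⟩ := exists_pair_ne X
  -- Enumerate `T` together with two triples that make the coordinate tuples distinct.
  set T' := insert (u, v, v) (insert (u, u, v) T)
  let τ : Fin T'.card → X × X × X := fun i => T'.equivFin.symm i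
  have hτ : ∀ t ∈ T', ∃ i, τ i = t := fun t ht => ⟨T'.equivFin ⟨t, ht⟩, by simp [τ]⟩
  obtain ⟨i₁, hi₁⟩ := hτ (u, v, v) (by simp [T'])
  obtain ⟨i₂, hi₂⟩ := hτ (u, u, v) (by simp [T'])
  obtain ⟨s, hs, α, hα, hsα⟩ := exists_pseudoSiggers_of_coord_ne hC hyp τ
    (fun h => huv (by simpa [hi₁] using congrFun h i₁))
    (fun h => huv (by simpa [hi₁] using congrFun h i₁))
    (fun h => huv (by simpa [hi₂] using congrFun h i₂))
  refine ⟨s, hs, α, id, hα.1, hC.proj 1 0, fun t ht => ?_⟩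
  obtain ⟨i, rfl⟩ := hτ t (by simp [T', ht])
  exact hsα i

end PseudoSiggers

section Limits

variable [Countable X] {C : ∀ n : ℕ, Set ((Fin n → X) → X)}

theorem exists_forall_finset_pseudoSiggersOn (hC : IsClone C) (hClosed : CloneClosed C)
    (hOlig : CloneOligomorphic C)
    (hfin : ∀ T : Finset (X × X × X), ∃ s ∈ C 6, ∃ a b : X → X,
      unaryOp a ∈ C 1 ∧ unaryOp b ∈ C 1 ∧ PseudoSiggersOn T s a b) :
    ∃ s ∈ C 6, ∀ T : Finset (X × X × X), ∃ a b : X → X,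
      unaryOp a ∈ C 1 ∧ unaryOp b ∈ C 1 ∧ PseudoSiggersOn T s a b := by
  classical
  let A : Finset (X × X × X) → Set ((Fin 6 → X) → X) := fun T =>
    {s | s ∈ C 6 ∧ ∃ a b : X → X, unaryOp a ∈ C 1 ∧ unaryOp b ∈ C 1 ∧ PseudoSiggersOn T s a b}
  have hA : Antitone A := fun T T' hTT' s ⟨hs, a, b, ha, hb, hab⟩ =>
    ⟨hs, a, b, ha, hb, fun t ht => hab t (hTT' ht)⟩
  have hinv : ∀ T, ∀ g ∈ hC.group, ∀ s ∈ A T, ⇑g ∘ s ∈ A T := by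
    rintro T g ⟨hg, hg'⟩ s ⟨hs, a, b, ha, hb, hab⟩
    refine ⟨hC.unaryOp_comp_mem hg hs, a ∘ g.symm, b ∘ g.symm,
      hC.unaryOp_comp_mem ha hg', hC.unaryOp_comp_mem hb hg', fun t ht => ?_⟩
    simpa using hab t ht
  obtain ⟨s, hs⟩ := exists_forall_inPointwiseClosure (G := hC.group) hOlig hA hinv hfin
  refine ⟨s, hClosed.mem_of_inPointwiseClosure (fun p hp => hp.1) (hs ∅), fun T => ?_⟩
  obtain ⟨p, ⟨-, a, b, ha, hb, hab⟩, hps⟩ := hs T (T.image siggersL ∪ T.image siggersR)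
  refine ⟨a, b, ha, hb, fun t ht => ?_⟩
  rw [← hps _ (Finset.mem_union_left _ (Finset.mem_image_of_mem _ ht)),
    ← hps _ (Finset.mem_union_right _ (Finset.mem_image_of_mem _ ht))]
  exact hab t ht

theorem exists_pseudoSiggers_of_forall_finset_s4 (hC : IsClone C) (hClosed : CloneClosed C)
    (hOlig : CloneOligomorphic C) {s : (Fin 6 → X) → X}
    (hs : ∀ T : Finset (X × X × X), ∃ a b : X → X,
      unaryOp a ∈ C 1 ∧ unaryOp b ∈ C 1 ∧ PseudoSiggersOn T s a b) :
    ∃ a b : X → X, unaryOp a ∈ C 1 ∧ unaryOp b ∈ C 1 ∧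
      ∀ t, a (s (siggersL t)) = b (s (siggersR t)) := by
  classical
  -- The pair `(a, b)` is encoded as the single map `Sum.elim a b : X ⊕ X → X`.
  let A : Finset (X × X × X) → Set (X ⊕ X → X) := fun T =>
    {q | unaryOp (q ∘ Sum.inl) ∈ C 1 ∧ unaryOp (q ∘ Sum.inr) ∈ C 1 ∧
      PseudoSiggersOn T s (q ∘ Sum.inl) (q ∘ Sum.inr)}
  have hA : Antitone A := fun T T' hTT' q ⟨ha, hb, hab⟩ =>
    ⟨ha, hb, fun t ht => hab t (hTT' ht)⟩
  have hinv : ∀ T, ∀ g ∈ hC.group, ∀ q ∈ A T, ⇑g ∘ q ∈ A T := by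
    rintro T g ⟨hg, -⟩ q ⟨ha, hb, hab⟩
    exact ⟨hC.unaryOp_comp_mem hg ha, hC.unaryOp_comp_mem hg hb,
      fun t ht => congrArg g (hab t ht)⟩
  have hne : ∀ T, (A T).Nonempty := fun T => by
    obtain ⟨a, b, ha, hb, hab⟩ := hs T
    exact ⟨Sum.elim a b, ha, hb, hab⟩
  obtain ⟨q, hq⟩ := exists_forall_inPointwiseClosure (G := hC.group) hOlig hA hinv hne
  have hmem : ∀ σ : X → X ⊕ X, (∀ q ∈ A ∅, unaryOp (q ∘ σ) ∈ C 1) → unaryOp (q ∘ σ) ∈ C 1 :=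
    fun σ h => hClosed.mem_of_inPointwiseClosure (by rintro _ ⟨p, hp, rfl⟩; exact h p hp)
      ((hq ∅).comp fun w : Fin 1 → X => σ (w 0))
  refine ⟨q ∘ Sum.inl, q ∘ Sum.inr, hmem _ fun p hp => hp.1, hmem _ fun p hp => hp.2.1,
    fun t => ?_⟩
  obtain ⟨p, ⟨-, -, hp⟩, hpq⟩ :=
    hq {t} {Sum.inl (s (siggersL t)), Sum.inr (s (siggersR t))}
  simp only [Function.comp_apply]
  rw [← hpq _ (by simp), ← hpq _ (by simp)]
  exact hp t (Finset.mem_singleton_self t)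

end Limits

/-- Let `C` be a topologically closed oligomorphic function clone on a
countable set `X`. If every symmetric binary relation `R` on `Xᵏ` (`k ≥ 1`) which is
preserved by `C` (as a `2k`-ary relation on `X`) and contains three pairwise distinct,
pairwise related elements has a pseudoloop with respect to the group of `C`,
then `C` has a pseudo-Siggers operation. -/
theorem statement4 {X : Type} [Countable X] (C : ∀ n : ℕ, Set ((Fin n → X) → X))
    (hClone : IsClone C) (hClosed : CloneClosed C) (hOlig : CloneOligomorphic C)
    (hyp : ∀ k : ℕ, 1 ≤ k → ∀ R : (Fin k → X) → (Fin k → X) → Prop,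
      (∀ b c, R b c → R c b) →
      (∀ (n : ℕ), ∀ f ∈ C n, ∀ b c : Fin n → Fin k → X,
        (∀ j, R (b j) (c j)) →
        R (fun i => f (fun j => b j i)) (fun i => f (fun j => c j i))) →
      (∃ a b c : Fin k → X, a ≠ b ∧ a ≠ c ∧ b ≠ c ∧ R a b ∧ R a c ∧ R b c) →
      ∃ (b : Fin k → X) (α : Equiv.Perm X), InGroupOf C α ∧ R b (fun i => α (b i))) :
    HasPseudoSiggers C := by
  rcases subsingleton_or_nontrivial X with hX | hX
  · exact ⟨fun w => w 0, hClone.proj 6 0, unaryOp id, hClone.proj 1 0, unaryOp id,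
      hClone.proj 1 0, fun _ _ _ => Subsingleton.elim _ _⟩
  obtain ⟨s, hs, hsT⟩ := exists_forall_finset_pseudoSiggersOn hClone hClosed hOlig
    (exists_pseudoSiggersOn_finset hClone hyp)
  obtain ⟨a, b, ha, hb, hab⟩ := exists_pseudoSiggers_of_forall_finset_s4 hClone hClosed hOlig hsT
  exact ⟨s, hs, unaryOp a, ha, unaryOp b, hb, fun x y z => hab (x, y, z)⟩
end

section
/- Let G be a permutation group acting oligomorphically on a countable set X and let R be a symmetric binary relation on X invariant under G such that every R-edge is contained in an R-triangle (for all x, y with R(x,y) there is z with R(x,z) and R(y,z) and x, y, z pairwise distinct). For n ≥ 1, call x, y ∈ X n-diamond-connected (x ∼ₙ y) if there exist a₁, b₁, c₁, d₁, …, aₙ, bₙ, cₙ, dₙ ∈ X such that for every 1 ≤ i ≤ n both {aᵢ, bᵢ, cᵢ} and {bᵢ, cᵢ, dᵢ} are sets of three pairwise distinct, pairwise R-related elements, and x = a₁, dᵢ = a_{i+1} for 1 ≤ i < n, and dₙ = y; call x, y diamond-connected (x ∼ y) if x ∼ₙ y for some n ≥ 1. Then: (1) there exists N ≥ 1 such that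 for all x, y ∈ X, x ∼ y if and only if x ∼_N y; and (2) the relation ∼ is an equivalence relation on the support of R, i.e., on the set of elements contained in some R-edge. -/
/-!
Diamond chains are mapped to diamond chains by `G`, and `∼ₙ ⊆ ∼ₙ₊₁` because a triangle through
the endpoint of a chain yields a diamond from that endpoint to itself, which can be appended.
Oligomorphicity leaves finitely many `G`-orbits of pairs, so the largest length needed by a
finite set of orbit representatives serves for all pairs. Symmetry and transitivity come from
reversing and concatenating chains.
-/

theorem GroupOligomorphic.exists_uniform_bound {X : Type} {G : Subgroup (Equiv.Perm X)}
    (hG : GroupOligomorphic G) (P : ℕ → X → X → Prop) (hmono : ∀ x y, Monotone (P · x y))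
    (hinv : ∀ α ∈ G, ∀ n x y, P n x y → P n (α x) (α y)) :
    ∃ N, ∀ x y, (∃ n, P n x y) ↔ P N x y := by
  obtain ⟨S, hS⟩ := hG 2
  have hbound : ∀ t : Fin 2 → X, ∃ n, (∃ m, P m (t 0) (t 1)) → P n (t 0) (t 1) := fun t =>
    (em _).elim (fun ⟨m, hm⟩ => ⟨m, fun _ => hm⟩) (fun h => ⟨0, fun h' => (h h').elim⟩)
  choose bound hbound using hbound
  refine ⟨S.sup bound, fun x y => ⟨fun ⟨n, hxy⟩ => ?_, fun h => ⟨_, h⟩⟩⟩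
  obtain ⟨t, htS, α, hαG, hαt⟩ := hS ![x, y]
  have hx : α (t 0) = x := hαt 0
  have hy : α (t 1) = y := hαt 1
  have ht : P n (t 0) (t 1) := by
    simpa [← hx, ← hy] using hinv α⁻¹ (inv_mem hαG) n x y hxy
  simpa [hx, hy] using
    hinv α hαG _ _ _ (hmono _ _ (Finset.le_sup htS) (hbound t ⟨n, ht⟩))

section Diamonds

variable {X : Type} {R : X → X → Prop}

theorem Triangle.rotate (hSym : ∀ x y, R x y → R y x) {a b c : X} (h : Triangle R a b c) :
    Triangle R b c a :=
  ⟨h.2.2.1, h.1.symm, h.2.1.symm, h.2.2.2.2.2, hSym _ _ h.2.2.2.1, hSym _ _ h.2.2.2.2.1⟩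

theorem Triangle.map {f : X → X} (hf : Function.Injective f) (hR : ∀ x y, R x y → R (f x) (f y))
    {a b c : X} (h : Triangle R a b c) : Triangle R (f a) (f b) (f c) :=
  ⟨hf.ne h.1, hf.ne h.2.1, hf.ne h.2.2.1, hR _ _ h.2.2.2.1, hR _ _ h.2.2.2.2.1,
    hR _ _ h.2.2.2.2.2⟩

theorem DiamondConn.map {f : X → X} (hf : Function.Injective f)
    (hR : ∀ x y, R x y → R (f x) (f y)) {n : ℕ} {x y : X} (h : DiamondConn R n x y) :
    DiamondConn R n (f x) (f y) := by
  obtain ⟨a, b, c, d, htri, ha, hlink, hd⟩ := h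
  exact ⟨f ∘ a, f ∘ b, f ∘ c, f ∘ d,
    fun i hi => ⟨(htri i hi).1.map hf hR, (htri i hi).2.map hf hR⟩,
    congrArg f ha, fun i hi => congrArg f (hlink i hi), congrArg f hd⟩

theorem DiamondConn.single {a b c d : X} (habc : Triangle R a b c) (hbcd : Triangle R b c d) :
    DiamondConn R 1 a d :=
  ⟨fun _ => a, fun _ => b, fun _ => c, fun _ => d, fun _ _ => ⟨habc, hbcd⟩, rfl,
    fun _ hi => absurd hi (by omega), rfl⟩

theorem DiamondConn.self_of_triangle (hSym : ∀ x y, R x y → R y x) {x b c : X}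
    (h : Triangle R x b c) : DiamondConn R 1 x x :=
  .single h (h.rotate hSym)

theorem DiamondConn.append {m n : ℕ} {x y z : X} (hm : 1 ≤ m) (hn : 1 ≤ n)
    (h₁ : DiamondConn R m x y) (h₂ : DiamondConn R n y z) : DiamondConn R (m + n) x z := by
  obtain ⟨a₁, b₁, c₁, d₁, htri₁, ha₁, hlink₁, hd₁⟩ := h₁
  obtain ⟨a₂, b₂, c₂, d₂, htri₂, ha₂, hlink₂, hd₂⟩ := h₂
  let glue (u v : ℕ → X) (i : ℕ) : X := if i < m then u i else v (i - m)
  refine ⟨glue a₁ a₂, glue b₁ b₂, glue c₁ c₂, glue d₁ d₂, fun i hi => ?_, ?_, fun i hi => ?_, ?_⟩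
  · by_cases h : i < m
    · simpa only [glue, if_pos h] using htri₁ i h
    · simpa only [glue, if_neg h] using htri₂ (i - m) (by omega)
  · simpa only [glue, if_pos (show 0 < m by omega)] using ha₁
  · by_cases h : i + 1 < m
    · simpa only [glue, if_pos (show i < m by omega), if_pos h] using hlink₁ i h
    · by_cases h' : i < m
      · obtain rfl : i = m - 1 := by omega
        simp only [glue, if_pos h', if_neg h, show m - 1 + 1 - m = 0 by omega, hd₁, ha₂]
      · simp only [glue, if_neg h, if_neg h', show i + 1 - m = i - m + 1 by omega]
        exact hlink₂ (i - m) (by omega)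
  · simpa only [glue, if_neg (show ¬m + n - 1 < m by omega),
      show m + n - 1 - m = n - 1 by omega] using hd₂

theorem DiamondConn.symm (hSym : ∀ x y, R x y → R y x) {n : ℕ} {x y : X}
    (h : DiamondConn R n x y) : DiamondConn R n y x := by
  obtain ⟨a, b, c, d, htri, ha, hlink, hd⟩ := h
  let rev (u : ℕ → X) (i : ℕ) : X := u (n - 1 - i)
  refine ⟨rev d, rev b, rev c, rev a, fun i hi => ?_, ?_, fun i hi => ?_, ?_⟩
  · obtain ⟨habc, hbcd⟩ := htri (n - 1 - i) (by omega)
    exact ⟨(hbcd.rotate hSym).rotate hSym, habc.rotate hSym⟩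
  · simpa only [rev, Nat.sub_zero] using hd
  · simp only [rev, show n - 1 - i = n - 1 - (i + 1) + 1 by omega]
    exact (hlink _ (by omega)).symm
  · simpa only [rev, Nat.sub_self] using ha

theorem DiamondConn.succ (hSym : ∀ x y, R x y → R y x) {n : ℕ} {x y : X}
    (h : DiamondConn R (n + 1) x y) : DiamondConn R (n + 2) x y := by
  obtain ⟨_, b, c, d, htri, -, -, hd⟩ := id h
  have hlast : Triangle R (b n) (c n) y := hd ▸ (htri n (by omega)).2
  exact h.append (m := n + 1) (n := 1) (by omega) le_rfl
    (.self_of_triangle hSym ((hlast.rotate hSym).rotate hSym))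

end Diamonds

theorem statement10_general {X : Type} (G : Subgroup (Equiv.Perm X)) (R : X → X → Prop)
    (hOlig : GroupOligomorphic G) (hSym : ∀ x y, R x y → R y x) (hInv : GGInvariant R G)
    (hTri : ∀ x y, R x y → ∃ z, Triangle R x y z) :
    (∃ N : ℕ, 1 ≤ N ∧ ∀ x y : X,
        (∃ n, 1 ≤ n ∧ DiamondConn R n x y) ↔ DiamondConn R N x y) ∧
    (∀ x ∈ Support R, ∃ n, 1 ≤ n ∧ DiamondConn R n x x) ∧
    (∀ x y, (∃ n, 1 ≤ n ∧ DiamondConn R n x y) → ∃ n, 1 ≤ n ∧ DiamondConn R n y x) ∧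
    (∀ x y z, (∃ n, 1 ≤ n ∧ DiamondConn R n x y) → (∃ n, 1 ≤ n ∧ DiamondConn R n y z) →
      ∃ n, 1 ≤ n ∧ DiamondConn R n x z) := by
  obtain ⟨N, hN⟩ := hOlig.exists_uniform_bound (fun n => DiamondConn R (n + 1))
    (fun _ _ => monotone_nat_of_le_succ fun _ => DiamondConn.succ hSym)
    (fun α hα _ _ _ => DiamondConn.map α.injective (hInv α hα))
  refine ⟨⟨N + 1, by omega, fun x y => ?_⟩, ?_, ?_, ?_⟩
  · refine ⟨fun ⟨n, hn, hxy⟩ => ?_, fun h => ⟨N + 1, by omega, h⟩⟩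
    obtain ⟨m, rfl⟩ := Nat.exists_eq_add_of_le' hn
    exact (hN x y).1 ⟨m, hxy⟩
  · rintro x ⟨y, hxy⟩
    obtain ⟨z, hxyz⟩ := hTri x y hxy
    exact ⟨1, le_rfl, .self_of_triangle hSym hxyz⟩
  · exact fun x y ⟨n, hn, hxy⟩ => ⟨n, hn, hxy.symm hSym⟩
  · exact fun x y z ⟨m, hm, hxy⟩ ⟨n, hn, hyz⟩ => ⟨m + n, by omega, hxy.append hm hn hyz⟩

/-- Let `G` act oligomorphically on a countable set `X` and let `R` be a
`G`-invariant symmetric relation every edge of which lies in a triangle. Then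
diamond-connectedness `∼` equals `∼_N` for some `N ≥ 1`, and `∼` is an equivalence
relation on the support of `R` (reflexive on the support, symmetric, transitive). -/
theorem statement10 {X : Type} [Countable X] (G : Subgroup (Equiv.Perm X)) (R : X → X → Prop)
    (hOlig : GroupOligomorphic G) (hSym : ∀ x y, R x y → R y x) (hInv : GGInvariant R G)
    (hTri : ∀ x y, R x y → ∃ z, Triangle R x y z) :
    (∃ N : ℕ, 1 ≤ N ∧ ∀ x y : X,
        (∃ n, 1 ≤ n ∧ DiamondConn R n x y) ↔ DiamondConn R N x y) ∧
    (∀ x ∈ Support R, ∃ n, 1 ≤ n ∧ DiamondConn R n x x) ∧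
    (∀ x y, (∃ n, 1 ≤ n ∧ DiamondConn R n x y) → ∃ n, 1 ≤ n ∧ DiamondConn R n y x) ∧
    (∀ x y z, (∃ n, 1 ≤ n ∧ DiamondConn R n x y) → (∃ n, 1 ≤ n ∧ DiamondConn R n y z) →
      ∃ n, 1 ≤ n ∧ DiamondConn R n x z) :=
  statement10_general G R hOlig hSym hInv hTri
end
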